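/- arXiv:1601.06872 — 2 statements merged into one kernel-verified Lean document; each statement's English description precedes it below -/
import Mathlib

section
/- Let F be a field with char F coprime to both n and n' (or zero), g, g' polynomials over F with deg g < n, deg g' < n'. Let ℓ = gcd(n, n'), d = deg[gcd(g, X^n − 1) · gcd(g', X^{n'} − 1) · (X^ℓ − 1) / gcd(g·g', X^ℓ − 1)], and r = min{m, n + n' − d}. Then the rank of the double circulant matrix M(g,g')_{m×(n+n')} = (M(g)_{m×n} | M(g')_{m×n'}) equals r. -/
open Polynomial Matrix

/-- The monic polynomial associated to `p` (and `0` for `p = 0`). -/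
noncomputable def monicize {F : Type*} [Field F] (p : Polynomial F) : Polynomial F :=
  Polynomial.C p.leadingCoeff⁻¹ * p

/-- The monic greatest common divisor of two polynomials over a field. -/
noncomputable def pgcd {F : Type*} [Field F] (p q : Polynomial F) : Polynomial F :=
  letI := Classical.decEq F
  monicize (EuclideanDomain.gcd p q)

/-- The monic least common multiple of two polynomials over a field. -/
noncomputable def plcm {F : Type*} [Field F] (p q : Polynomial F) : Polynomial F :=
  letI := Classical.decEq F
  monicize (EuclideanDomain.lcm p q)

/-- Generalized circulant matrix: `(i,k)`-entry is `g_{(k-i) mod n}`. -/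
def circMat (F : Type*) [Field F] (m n : ℕ) (g : Polynomial F) :
    Matrix (Fin m) (Fin n) F :=
  Matrix.of fun i k => g.coeff ((k.1 + (n - 1) * i.1) % n)

section PolyOf

variable {F : Type*} [Field F]

/-- The polynomial with coefficients given by a finite tuple. -/
noncomputable def polyOfFun {m : ℕ} (v : Fin m → F) : Polynomial F :=
  ∑ i : Fin m, Polynomial.monomial i.1 (v i)

lemma coeff_polyOfFun {m : ℕ} (v : Fin m → F) (j : ℕ) :
    (polyOfFun v).coeff j = if h : j < m then v ⟨j, h⟩ else 0 := by
  rw [polyOfFun, finset_sum_coeff]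
  simp only [coeff_monomial]
  split
  · next h =>
    rw [Finset.sum_eq_single (⟨j, h⟩ : Fin m)]
    · simp
    · intro b _ hb
      rw [if_neg]
      exact fun hbj => hb (Fin.ext hbj)
    · simp
  · next h =>
    apply Finset.sum_eq_zero
    intro k _
    rw [if_neg]
    omega

lemma degree_polyOfFun_lt {m : ℕ} (v : Fin m → F) : (polyOfFun v).degree < (m : ℕ) := by
  rw [polyOfFun]
  apply lt_of_le_of_lt (degree_sum_le _ _)
  rw [Finset.sup_lt_iff (by exact_mod_cast WithBot.bot_lt_coe m)]
  intro k _
  exact lt_of_le_of_lt (degree_monomial_le _ _) (by exact_mod_cast k.2)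

lemma polyOfFun_coeff_eq {m : ℕ} (f : Polynomial F) (hf : f.degree < (m : ℕ)) :
    polyOfFun (fun i : Fin m => f.coeff i.1) = f := by
  ext j
  rw [coeff_polyOfFun]
  split
  · rfl
  · next h =>
    exact (coeff_eq_zero_of_degree_lt (lt_of_lt_of_le hf (by exact_mod_cast Nat.le_of_not_lt h))).symm

/-- `polyOfFun` as a linear map. -/
noncomputable def polyOfL (F : Type*) [Field F] (m : ℕ) : (Fin m → F) →ₗ[F] Polynomial F where
  toFun := polyOfFun
  map_add' u v := by simp [polyOfFun, Finset.sum_add_distrib]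
  map_smul' c v := by simp [polyOfFun, Finset.smul_sum, Polynomial.smul_monomial]

@[simp] lemma polyOfL_apply {m : ℕ} (v : Fin m → F) : polyOfL F m v = polyOfFun v := rfl

end PolyOf


section Conv
variable {F : Type*} [Field F]

lemma modlem1 {n : ℕ} (hn : 0 < n) (i t : ℕ) (ht : t < n) :
    ((i + t) % n + (n - 1) * i) % n = t := by
  rw [Nat.mod_add_mod]
  have h1 : i + t + (n - 1) * i = t + n * i := by
    have : (n - 1) * i + i = n * i := by
      rcases n with _ | k
      · omega
      · simp [Nat.succ_sub_one, Nat.succ_mul]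
    omega
  rw [h1, Nat.add_mul_mod_self_left, Nat.mod_eq_of_lt ht]

lemma modlem2 {n : ℕ} (hn : 0 < n) (i t : ℕ) (ht : t < n) :
    (i + (t + (n - 1) * i) % n) % n = t := by
  rw [Nat.add_mod_mod]
  have h1 : i + (t + (n - 1) * i) = t + n * i := by
    have : (n - 1) * i + i = n * i := by
      rcases n with _ | k
      · omega
      · simp [Nat.succ_sub_one, Nat.succ_mul]
    omega
  rw [h1, Nat.add_mul_mod_self_left, Nat.mod_eq_of_lt ht]

lemma dvd_X_pow_sub_X_pow_mod {n : ℕ} (a : ℕ) :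
    ((X : Polynomial F) ^ n - 1) ∣ X ^ a - X ^ (a % n) := by
  have hX : (X : Polynomial F) ^ a = X ^ (a % n) * (X ^ n) ^ (a / n) := by
    rw [← pow_mul, ← pow_add]
    congr 1
    exact (Nat.mod_add_div a n).symm
  have h2 : (X : Polynomial F) ^ a - X ^ (a % n)
      = X ^ (a % n) * ((X ^ n) ^ (a / n) - 1) := by
    rw [hX]; ring
  rw [h2]
  exact Dvd.dvd.mul_left (by simpa using sub_dvd_pow_sub_pow ((X : Polynomial F) ^ n) 1 (a / n)) _

lemma cyc_dvd {n : ℕ} (hn : 0 < n) (g : Polynomial F) (hg : g.degree < (n : ℕ)) (i : ℕ) :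
    ((X : Polynomial F) ^ n - 1) ∣
      X ^ i * g - polyOfFun (fun k : Fin n => g.coeff ((k.1 + (n - 1) * i) % n)) := by
  have hgs : g = polyOfFun (fun j : Fin n => g.coeff j.1) := (polyOfFun_coeff_eq g hg).symm
  -- reindexing equivalence
  let e : Fin n ≃ Fin n :=
    { toFun := fun j => ⟨(i + j.1) % n, Nat.mod_lt _ hn⟩
      invFun := fun k => ⟨(k.1 + (n - 1) * i) % n, Nat.mod_lt _ hn⟩
      left_inv := fun j => Fin.ext (modlem1 hn i j.1 j.2)
      right_inv := fun k => Fin.ext (modlem2 hn i k.1 k.2) }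
  have hre : polyOfFun (fun k : Fin n => g.coeff ((k.1 + (n - 1) * i) % n))
      = ∑ j : Fin n, Polynomial.monomial ((i + j.1) % n) (g.coeff j.1) := by
    rw [polyOfFun]
    refine (Fintype.sum_equiv e (fun j => Polynomial.monomial ((i + j.1) % n) (g.coeff j.1))
      (fun k => Polynomial.monomial k.1 (g.coeff ((k.1 + (n - 1) * i) % n))) ?_).symm
    intro j
    have h1 : (((i + j.1) % n) + (n - 1) * i) % n = j.1 := modlem1 hn i j.1 j.2
    simp only [e, Equiv.coe_fn_mk, h1]
  have hxg : X ^ i * g = ∑ j : Fin n, Polynomial.monomial (i + j.1) (g.coeff j.1) := by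
    conv_lhs => rw [hgs, polyOfFun, Finset.mul_sum]
    congr 1
    ext j
    rw [X_pow_eq_monomial, monomial_mul_monomial, one_mul]
  rw [hxg, hre, ← Finset.sum_sub_distrib]
  apply Finset.dvd_sum
  intro j _
  have hmm : Polynomial.monomial (i + j.1) (g.coeff j.1)
        - Polynomial.monomial ((i + j.1) % n) (g.coeff j.1)
      = (X ^ (i + j.1) - X ^ ((i + j.1) % n)) * C (g.coeff j.1) := by
    rw [sub_mul, X_pow_mul_C, X_pow_mul_C, ← C_mul_X_pow_eq_monomial, ← C_mul_X_pow_eq_monomial]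
  rw [hmm]
  exact Dvd.dvd.mul_right (dvd_X_pow_sub_X_pow_mod _) _
end Conv

section Conv2
variable {F : Type*} [Field F]

lemma conv_iff {m n : ℕ} (hn : 0 < n) (g : Polynomial F) (hg : g.degree < (n : ℕ))
    (v : Fin m → F) :
    (((X : Polynomial F) ^ n - 1) ∣ polyOfFun v * g) ↔
      ∀ k : Fin n, (∑ i : Fin m, g.coeff ((k.1 + (n - 1) * i.1) % n) * v i) = 0 := by
  set c : Fin n → F := fun k => ∑ i : Fin m, g.coeff ((k.1 + (n - 1) * i.1) % n) * v i with hc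
  set r : Polynomial F := polyOfFun c with hr
  have expand : polyOfFun v * g - r
      = ∑ i : Fin m, C (v i) *
          (X ^ (i.1) * g - polyOfFun (fun k : Fin n => g.coeff ((k.1 + (n - 1) * i.1) % n))) := by
    have h1 : polyOfFun v * g = ∑ i : Fin m, C (v i) * (X ^ (i.1) * g) := by
      rw [polyOfFun, Finset.sum_mul]
      congr 1
      ext i
      rw [← mul_assoc, C_mul_X_pow_eq_monomial]
    have h2 : r = ∑ i : Fin m, C (v i) *
        polyOfFun (fun k : Fin n => g.coeff ((k.1 + (n - 1) * i.1) % n)) := by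
      rw [hr, polyOfFun, hc]
      have : ∀ i : Fin m, C (v i) * ∑ k : Fin n,
            Polynomial.monomial k.1 (g.coeff ((k.1 + (n - 1) * i.1) % n))
          = ∑ k : Fin n, Polynomial.monomial k.1 (g.coeff ((k.1 + (n - 1) * i.1) % n) * v i) := by
        intro i
        rw [Finset.mul_sum]
        congr 1
        ext k
        rw [C_mul_monomial, mul_comm]
      simp only [polyOfFun, this]
      rw [Finset.sum_comm]
      congr 1
      ext k
      rw [map_sum]
    rw [h1, h2, ← Finset.sum_sub_distrib]
    congr 1
    ext i
    rw [mul_sub]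
  have hdiff : ((X : Polynomial F) ^ n - 1) ∣ polyOfFun v * g - r := by
    rw [expand]
    exact Finset.dvd_sum fun i _ => Dvd.dvd.mul_left (cyc_dvd hn g hg i.1) _
  have hdeg : r.degree < ((X : Polynomial F) ^ n - 1).degree := by
    have : ((X : Polynomial F) ^ n - 1).degree = (n : ℕ) := by
      simpa using degree_X_pow_sub_C hn (1 : F)
    rw [this]
    exact degree_polyOfFun_lt c
  constructor
  · intro h k
    have hrd : ((X : Polynomial F) ^ n - 1) ∣ r := by
      have := dvd_sub h hdiff
      simpa using this
    have hr0 : r = 0 := eq_zero_of_dvd_of_degree_lt hrd hdeg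
    have := congrArg (fun p => Polynomial.coeff p k.1) hr0
    simpa [hr, coeff_polyOfFun, k.2] using this
  · intro h
    have hr0 : r = 0 := by
      rw [hr, polyOfFun]
      apply Finset.sum_eq_zero
      intro k _
      have hk : c k = 0 := h k
      rw [hk, Polynomial.monomial_zero_right]
    have := hdiff
    rw [hr0, sub_zero] at this
    exact this

end Conv2

section Dim
variable {F : Type*} [Field F]

lemma polyOfFun_eq_zero_iff {m : ℕ} (v : Fin m → F) : polyOfFun v = 0 ↔ v = 0 := by
  constructor
  · intro h
    funext i
    have := congrArg (fun p => Polynomial.coeff p i.1) h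
    simpa [coeff_polyOfFun, i.2] using this
  · intro h
    subst h
    simp [polyOfFun]

lemma finrank_ker_polyOf (m : ℕ) (L : Polynomial F) (hL : L ≠ 0) :
    Module.finrank F
        (Submodule.comap (polyOfL F m) ((Ideal.span {L}).restrictScalars F))
      = m - min m L.natDegree := by
  set D := L.natDegree with hD
  set K := Submodule.comap (polyOfL F m) ((Ideal.span {L}).restrictScalars F) with hK
  have memK : ∀ v : Fin m → F, v ∈ K ↔ L ∣ polyOfFun v := by
    intro v
    rw [hK, Submodule.mem_comap]
    simp [Ideal.mem_span_singleton]
  rcases le_or_gt D m with hDm | hDm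
  · -- case D ≤ m : K has rank m - D
    have hmin : min m D = D := min_eq_right hDm
    set μ : (Fin (m - D) → F) →ₗ[F] (Fin m → F) :=
      (LinearMap.pi (fun i : Fin m => Polynomial.lcoeff F i.1)) ∘ₗ
        (LinearMap.mulLeft F L) ∘ₗ polyOfL F (m - D) with hμ
    have hμapp : ∀ (w : Fin (m - D) → F) (i : Fin m),
        μ w i = (L * polyOfFun w).coeff i.1 := by
      intro w i
      simp [hμ, LinearMap.mulLeft_apply, lcoeff_apply]
    have hdegmul : ∀ w : Fin (m - D) → F, (L * polyOfFun w).degree < (m : ℕ) := by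
      intro w
      rcases eq_or_ne (polyOfFun w) 0 with h0 | h0
      · rw [h0, mul_zero]
        exact lt_of_lt_of_le (by exact_mod_cast WithBot.bot_lt_coe m) le_rfl
      · rw [degree_mul, degree_eq_natDegree hL, degree_eq_natDegree h0]
        have h1 : (polyOfFun w).natDegree < m - D := by
          have := degree_polyOfFun_lt w
          rw [degree_eq_natDegree h0] at this
          exact_mod_cast this
        have : D + (polyOfFun w).natDegree < m := by omega
        exact_mod_cast (by exact_mod_cast this :
          ((D : WithBot ℕ) + ((polyOfFun w).natDegree : WithBot ℕ)) < (m : WithBot ℕ))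
    have hinj : Function.Injective μ := by
      rw [← LinearMap.ker_eq_bot, Submodule.eq_bot_iff]
      intro w hw
      rw [LinearMap.mem_ker] at hw
      have h0 : L * polyOfFun w = 0 := by
        by_contra hne
        have hcoe : (L * polyOfFun w).natDegree < m := by
          have := hdegmul w
          rw [degree_eq_natDegree hne] at this
          exact_mod_cast this
        have := congrFun hw ⟨(L * polyOfFun w).natDegree, hcoe⟩
        rw [hμapp] at this
        simp only [Pi.zero_apply] at this
        exact (Polynomial.leadingCoeff_ne_zero.mpr hne) this
      have := (mul_eq_zero.mp h0).resolve_left hL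
      exact (polyOfFun_eq_zero_iff w).mp this
    have hrange : LinearMap.range μ = K := by
      apply le_antisymm
      · rintro v ⟨w, rfl⟩
        rw [memK]
        have : polyOfFun (fun i : Fin m => (L * polyOfFun w).coeff i.1) = L * polyOfFun w :=
          polyOfFun_coeff_eq _ (hdegmul w)
        have heq : polyOfFun (μ w) = L * polyOfFun w := by
          have harg : μ w = fun i : Fin m => (L * polyOfFun w).coeff i.1 := by
            funext i
            exact hμapp w i
          rw [harg, this]
        rw [heq]
        exact Dvd.intro _ rfl
      · intro v hv
        rw [memK] at hv
        obtain ⟨q, hq⟩ := hv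
        have hqdeg : q.degree < ((m - D : ℕ) : WithBot ℕ) := by
          rcases eq_or_ne q 0 with rfl | h0
          · exact_mod_cast WithBot.bot_lt_coe _
          · have hvdeg := degree_polyOfFun_lt v
            rw [hq, degree_mul, degree_eq_natDegree hL, degree_eq_natDegree h0] at hvdeg
            have : D + q.natDegree < m := by exact_mod_cast hvdeg
            rw [degree_eq_natDegree h0]
            exact_mod_cast (by omega : q.natDegree < m - D)
        refine ⟨fun j : Fin (m - D) => q.coeff j.1, ?_⟩
        funext i
        rw [hμapp, polyOfFun_coeff_eq q hqdeg, ← hq, coeff_polyOfFun]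
        simp [i.2]
    have : Module.finrank F K = m - D := by
      rw [← hrange, LinearMap.finrank_range_of_inj hinj]
      simp [Module.finrank_fin_fun]
    rw [this, hmin]
  · -- case m < D : K = ⊥
    have hmin : min m D = m := min_eq_left (le_of_lt hDm)
    have hbot : K = ⊥ := by
      rw [Submodule.eq_bot_iff]
      intro v hv
      rw [memK] at hv
      have h0 : polyOfFun v = 0 := by
        apply eq_zero_of_dvd_of_degree_lt hv
        apply lt_of_lt_of_le (degree_polyOfFun_lt v)
        rw [degree_eq_natDegree hL]
        exact_mod_cast le_of_lt hDm
      exact (polyOfFun_eq_zero_iff v).mp h0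
    rw [hbot, hmin]
    simp

end Dim

section Alg
variable {F : Type*} [Field F]

lemma isCoprime_of_squarefree_mul {α : Type*} [EuclideanDomain α] [DecidableEq α]
    {u v : α} (h : Squarefree (u * v)) : IsCoprime u v := by
  rw [← EuclideanDomain.gcd_isUnit_iff]
  exact h _ (mul_dvd_mul (EuclideanDomain.gcd_dvd_left u v) (EuclideanDomain.gcd_dvd_right u v))

lemma X_pow_sub_one_dvd_of_dvd {ℓ n : ℕ} (h : ℓ ∣ n) :
    ((X : Polynomial F) ^ ℓ - 1) ∣ X ^ n - 1 := by
  obtain ⟨k, rfl⟩ := h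
  simpa [← pow_mul] using sub_dvd_pow_sub_pow ((X : Polynomial F) ^ ℓ) 1 k

lemma dvd_X_pow_gcd_sub_one {n n' : ℕ} (hn : 0 < n) (hn' : 0 < n')
    (w : Polynomial F) (h1 : w ∣ X ^ n - 1) (h2 : w ∣ X ^ n' - 1) :
    w ∣ X ^ (Nat.gcd n n') - 1 := by
  set I : Ideal (Polynomial F) := Ideal.span {w} with hI
  set x : Polynomial F ⧸ I := Ideal.Quotient.mk I X with hx
  have hpow : ∀ t : ℕ, w ∣ X ^ t - 1 ↔ x ^ t = 1 := by
    intro t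
    have hmk : x ^ t - 1 = Ideal.Quotient.mk I (X ^ t - 1) := by
      simp [hx]
    rw [← sub_eq_zero (a := x ^ t), hmk, Ideal.Quotient.eq_zero_iff_mem, hI,
      Ideal.mem_span_singleton]
  have hxn : x ^ n = 1 := (hpow n).mp h1
  have hxn' : x ^ n' = 1 := (hpow n').mp h2
  have hn1 : (n - 1) + 1 = n := Nat.succ_pred_eq_of_pos hn
  have hval : x * x ^ (n - 1) = 1 := by
    rw [← pow_succ', hn1, hxn]
  let u : (Polynomial F ⧸ I)ˣ := ⟨x, x ^ (n - 1), hval, by rwa [mul_comm] at hval⟩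
  have hu : ∀ t : ℕ, u ^ t = 1 ↔ x ^ t = 1 := by
    intro t
    rw [Units.ext_iff, Units.val_pow_eq_pow_val, Units.val_one]
  have hordn : orderOf u ∣ n := orderOf_dvd_of_pow_eq_one ((hu n).mpr hxn)
  have hordn' : orderOf u ∣ n' := orderOf_dvd_of_pow_eq_one ((hu n').mpr hxn')
  have hg : u ^ (Nat.gcd n n') = 1 :=
    orderOf_dvd_iff_pow_eq_one.mp (Nat.dvd_gcd hordn hordn')
  exact (hpow _).mpr ((hu _).mp hg)

end Alg

section Monicize
variable {F : Type*} [Field F]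

lemma monicize_ne_zero {p : Polynomial F} (hp : p ≠ 0) : monicize p ≠ 0 := by
  rw [monicize]
  exact mul_ne_zero (by simp [leadingCoeff_ne_zero.mpr hp]) hp

lemma natDegree_monicize (p : Polynomial F) : (monicize p).natDegree = p.natDegree := by
  rcases eq_or_ne p 0 with rfl | hp
  · simp [monicize]
  · rw [monicize]
    exact natDegree_C_mul (inv_ne_zero (leadingCoeff_ne_zero.mpr hp))

lemma associated_monicize (p : Polynomial F) (hp : p ≠ 0) : Associated p (monicize p) := by
  obtain ⟨u, hu⟩ := isUnit_C.mpr (IsUnit.mk0 _ (inv_ne_zero (leadingCoeff_ne_zero.mpr hp)))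
  exact ⟨u, by rw [monicize, ← hu, mul_comm]⟩

end Monicize


theorem stmt_11 (F : Type*) [Field F]
    (m n n' : ℕ) (hm : 0 < m) (hn : 0 < n) (hn' : 0 < n')
    (hchar : ringChar F = 0 ∨ Nat.Coprime (ringChar F) (n * n'))
    (g g' : Polynomial F) (hg : g.degree < n) (hg' : g'.degree < n')
    (ℓ : ℕ) (hℓ : ℓ = Nat.gcd n n')
    (d : ℕ)
    (hd : d = (pgcd g (X ^ n - 1) * pgcd g' (X ^ n' - 1) * (X ^ ℓ - 1)
                / pgcd (g * g') (X ^ ℓ - 1)).natDegree) :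
    (Matrix.fromCols (circMat F m n g) (circMat F m n' g')).rank
      = min m (n + n' - d) := by
  letI : DecidableEq F := Classical.decEq F
  -- ## Polynomial setup
  set A : Polynomial F := X ^ n - 1 with hA
  set B : Polynomial F := X ^ n' - 1 with hB
  set E : Polynomial F := X ^ ℓ - 1 with hE
  have hℓpos : 0 < ℓ := hℓ ▸ Nat.gcd_pos_of_pos_left n' hn
  have hℓn : ℓ ∣ n := hℓ ▸ Nat.gcd_dvd_left n n'
  have hℓn' : ℓ ∣ n' := hℓ ▸ Nat.gcd_dvd_right n n'
  -- casts are nonzero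
  have hcast : ∀ k : ℕ, 0 < k → k ∣ n * n' → (k : F) ≠ 0 := by
    intro k hk hkd h0
    have hch : ringChar F ∣ k := ringChar.dvd h0
    rcases hchar with h | h
    · rw [h] at hch
      exact hk.ne' (Nat.eq_zero_of_zero_dvd hch)
    · have h1 : ringChar F ∣ n * n' := hch.trans hkd
      have h2 : ringChar F ∣ Nat.gcd (ringChar F) (n * n') := Nat.dvd_gcd dvd_rfl h1
      rw [Nat.Coprime] at h
      rw [h] at h2
      exact CharP.char_ne_one F (ringChar F) (Nat.dvd_one.mp h2)
  have hnF : (n : F) ≠ 0 := hcast n hn (Dvd.intro n' rfl)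
  have hn'F : (n' : F) ≠ 0 := hcast n' hn' (Dvd.intro_left n rfl)
  have hℓF : (ℓ : F) ≠ 0 := hcast ℓ hℓpos (hℓn.trans (Dvd.intro n' rfl))
  -- basic facts about A, B, E
  have sqf : ∀ k : ℕ, (k : F) ≠ 0 → Squarefree ((X : Polynomial F) ^ k - 1) := by
    intro k hk
    have := (separable_X_pow_sub_C (1 : F) hk one_ne_zero).squarefree
    simpa using this
  have sqA : Squarefree A := hA ▸ sqf n hnF
  have sqB : Squarefree B := hB ▸ sqf n' hn'F
  have sqE : Squarefree E := hE ▸ sqf ℓ hℓF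
  have hmonic : ∀ k : ℕ, 0 < k → ((X : Polynomial F) ^ k - 1).Monic := by
    intro k hk
    simpa using monic_X_pow_sub_C (1 : F) hk.ne'
  have hA0 : A ≠ 0 := (hmonic n hn).ne_zero
  have hB0 : B ≠ 0 := (hmonic n' hn').ne_zero
  have hE0 : E ≠ 0 := (hmonic ℓ hℓpos).ne_zero
  have hAd : A.natDegree = n := hA ▸ (by simpa using natDegree_X_pow_sub_C (n := n) (r := (1:F)))
  have hBd : B.natDegree = n' := hB ▸ (by simpa using natDegree_X_pow_sub_C (n := n') (r := (1:F)))
  have hEd : E.natDegree = ℓ := hE ▸ (by simpa using natDegree_X_pow_sub_C (n := ℓ) (r := (1:F)))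
  have hEA : E ∣ A := hA ▸ hE ▸ X_pow_sub_one_dvd_of_dvd hℓn
  have hEB : B ∣ B := dvd_rfl
  have hEB' : E ∣ B := hB ▸ hE ▸ X_pow_sub_one_dvd_of_dvd hℓn'
  -- gcd setup
  set Gg : Polynomial F := EuclideanDomain.gcd g A with hGg
  set Gg' : Polynomial F := EuclideanDomain.gcd g' B with hGg'
  have hGg0 : Gg ≠ 0 := by
    rw [hGg, Ne, EuclideanDomain.gcd_eq_zero_iff]
    exact fun h => hA0 h.2
  have hGg'0 : Gg' ≠ 0 := by
    rw [hGg', Ne, EuclideanDomain.gcd_eq_zero_iff]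
    exact fun h => hB0 h.2
  set a : Polynomial F := A / Gg with ha
  set b : Polynomial F := B / Gg' with hb
  have haA : Gg * a = A :=
    EuclideanDomain.mul_div_cancel' hGg0 (EuclideanDomain.gcd_dvd_right g A)
  have hbB : Gg' * b = B :=
    EuclideanDomain.mul_div_cancel' hGg'0 (EuclideanDomain.gcd_dvd_right g' B)
  have ha0 : a ≠ 0 := fun h => hA0 (by rw [← haA, h, mul_zero])
  have hb0 : b ≠ 0 := fun h => hB0 (by rw [← hbB, h, mul_zero])
  have haDvdA : a ∣ A := Dvd.intro_left Gg haA
  have hbDvdB : b ∣ B := Dvd.intro_left Gg' hbB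
  have hcopGa : IsCoprime Gg a := isCoprime_of_squarefree_mul (haA.symm ▸ sqA)
  have hcopGb : IsCoprime Gg' b := isCoprime_of_squarefree_mul (hbB.symm ▸ sqB)
  -- a is coprime to g (and b to g')
  have hcopag : IsCoprime a g := by
    rw [← EuclideanDomain.gcd_isUnit_iff]
    refine hcopGa.isUnit_of_dvd' ?_ (EuclideanDomain.gcd_dvd_left a g)
    exact EuclideanDomain.dvd_gcd (EuclideanDomain.gcd_dvd_right a g)
      ((EuclideanDomain.gcd_dvd_left a g).trans haDvdA)
  have hcopbg : IsCoprime b g' := by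
    rw [← EuclideanDomain.gcd_isUnit_iff]
    refine hcopGb.isUnit_of_dvd' ?_ (EuclideanDomain.gcd_dvd_left b g')
    exact EuclideanDomain.dvd_gcd (EuclideanDomain.gcd_dvd_right b g')
      ((EuclideanDomain.gcd_dvd_left b g').trans hbDvdB)
  -- the key divisibility characterizations
  have hkeyA : ∀ f : Polynomial F, (A ∣ f * g) ↔ a ∣ f := by
    intro f
    constructor
    · intro h
      exact hcopag.dvd_of_dvd_mul_right (haDvdA.trans h)
    · rintro ⟨t, rfl⟩
      have h1 : Gg * a ∣ g * a := mul_dvd_mul (EuclideanDomain.gcd_dvd_left g A) dvd_rfl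
      rw [haA] at h1
      exact h1.trans ⟨t, by ring⟩
  have hkeyB : ∀ f : Polynomial F, (B ∣ f * g') ↔ b ∣ f := by
    intro f
    constructor
    · intro h
      exact hcopbg.dvd_of_dvd_mul_right (hbDvdB.trans h)
    · rintro ⟨t, rfl⟩
      have h1 : Gg' * b ∣ g' * b := mul_dvd_mul (EuclideanDomain.gcd_dvd_left g' B) dvd_rfl
      rw [hbB] at h1
      exact h1.trans ⟨t, by ring⟩
  -- gcd of a and b, and gcd of g*g' with E
  set e : Polynomial F := EuclideanDomain.gcd a b with he
  set c : Polynomial F := EuclideanDomain.gcd (g * g') E with hc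
  set L : Polynomial F := EuclideanDomain.lcm a b with hL
  have he0 : e ≠ 0 := by
    rw [he, Ne, EuclideanDomain.gcd_eq_zero_iff]
    exact fun h => ha0 h.1
  have hc0 : c ≠ 0 := by
    rw [hc, Ne, EuclideanDomain.gcd_eq_zero_iff]
    exact fun h => hE0 h.2
  have hab0 : a * b ≠ 0 := mul_ne_zero ha0 hb0
  have hgl : e * L = a * b := EuclideanDomain.gcd_mul_lcm a b
  have hL0 : L ≠ 0 := fun h => hab0 (by rw [← hgl, h, mul_zero])
  -- e divides E
  have heE : e ∣ E := by
    rw [hE, hℓ]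
    exact dvd_X_pow_gcd_sub_one hn hn' e
      (hA ▸ (EuclideanDomain.gcd_dvd_left a b).trans haDvdA)
      (hB ▸ (EuclideanDomain.gcd_dvd_right a b).trans hbDvdB)
  have hcE : c ∣ E := EuclideanDomain.gcd_dvd_right (g * g') E
  have hcgg : c ∣ g * g' := EuclideanDomain.gcd_dvd_left (g * g') E
  -- s := E / c
  set s : Polynomial F := E / c with hs
  have hcs : c * s = E := EuclideanDomain.mul_div_cancel' hc0 hcE
  have hs0 : s ≠ 0 := fun h => hE0 (by rw [← hcs, h, mul_zero])
  have hsE : s ∣ E := Dvd.intro_left c hcs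
  have hcopcs : IsCoprime c s := isCoprime_of_squarefree_mul (hcs.symm ▸ sqE)
  have hcopsgg : IsCoprime s (g * g') := by
    rw [← EuclideanDomain.gcd_isUnit_iff]
    refine hcopcs.isUnit_of_dvd' ?_ (EuclideanDomain.gcd_dvd_left s (g * g'))
    exact EuclideanDomain.dvd_gcd (EuclideanDomain.gcd_dvd_right s (g * g'))
      ((EuclideanDomain.gcd_dvd_left s (g * g')).trans hsE)
  have hcopsg : IsCoprime s g := hcopsgg.of_isCoprime_of_dvd_right (Dvd.intro g' rfl)
  have hcopsg' : IsCoprime s g' := hcopsgg.of_isCoprime_of_dvd_right (Dvd.intro_left g rfl)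
  -- s divides a and b, hence e
  have hsa : s ∣ a := by
    have h1 : IsCoprime s Gg :=
      hcopsg.of_isCoprime_of_dvd_right (EuclideanDomain.gcd_dvd_left g A)
    exact h1.dvd_of_dvd_mul_left (by rw [haA]; exact hsE.trans hEA)
  have hsb : s ∣ b := by
    have h1 : IsCoprime s Gg' :=
      hcopsg'.of_isCoprime_of_dvd_right (EuclideanDomain.gcd_dvd_left g' B)
    exact h1.dvd_of_dvd_mul_left (by rw [hbB]; exact hsE.trans hEB')
  have hse : s ∣ e := EuclideanDomain.dvd_gcd hsa hsb
  -- E is associated to e * c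
  have hcopeg : IsCoprime e g :=
    hcopag.of_isCoprime_of_dvd_left (EuclideanDomain.gcd_dvd_left a b)
  have hcopeg' : IsCoprime e g' :=
    hcopbg.of_isCoprime_of_dvd_left (EuclideanDomain.gcd_dvd_right a b)
  have hcopec : IsCoprime e c :=
    (hcopeg.mul_right hcopeg').of_isCoprime_of_dvd_right hcgg
  have hecE : e * c ∣ E := hcopec.mul_dvd heE hcE
  have hEec : E ∣ e * c := by
    calc E = c * s := hcs.symm
    _ ∣ c * e := mul_dvd_mul_left c hse
    _ = e * c := mul_comm c e
  have hdegEC : e.natDegree + c.natDegree = ℓ := by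
    have h1 : (e * c).natDegree = E.natDegree :=
      Nat.le_antisymm
        (Polynomial.natDegree_le_of_dvd hecE hE0)
        (Polynomial.natDegree_le_of_dvd hEec (mul_ne_zero he0 hc0))
    rw [natDegree_mul he0 hc0, hEd] at h1
    exact h1
  -- degrees of the gcd decomposition
  have hdegA : Gg.natDegree + a.natDegree = n := by
    have := natDegree_mul hGg0 ha0
    rw [haA, hAd] at this
    exact this.symm
  have hdegB : Gg'.natDegree + b.natDegree = n' := by
    have := natDegree_mul hGg'0 hb0
    rw [hbB, hBd] at this
    exact this.symm
  have hdegL : e.natDegree + L.natDegree = a.natDegree + b.natDegree := by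
    have := congrArg Polynomial.natDegree hgl
    rwa [natDegree_mul he0 hL0, natDegree_mul ha0 hb0] at this
  -- c divides Gg * Gg'
  have hcGG : c ∣ Gg * Gg' := by
    set c1 : Polynomial F := EuclideanDomain.gcd c g with hc1
    have hc10 : c1 ≠ 0 := by
      rw [hc1, Ne, EuclideanDomain.gcd_eq_zero_iff]
      exact fun h => hc0 h.1
    set c2 : Polynomial F := c / c1 with hc2
    have hc12 : c1 * c2 = c :=
      EuclideanDomain.mul_div_cancel' hc10 (EuclideanDomain.gcd_dvd_left c g)
    have sqc : Squarefree c := sqE.squarefree_of_dvd hcE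
    have hcop12 : IsCoprime c1 c2 := isCoprime_of_squarefree_mul (hc12.symm ▸ sqc)
    have hc2c : c2 ∣ c := Dvd.intro_left c1 hc12
    have hcopc2g : IsCoprime c2 g := by
      rw [← EuclideanDomain.gcd_isUnit_iff]
      refine hcop12.isUnit_of_dvd' ?_ (EuclideanDomain.gcd_dvd_left c2 g)
      exact EuclideanDomain.dvd_gcd ((EuclideanDomain.gcd_dvd_left c2 g).trans hc2c)
        (EuclideanDomain.gcd_dvd_right c2 g)
    have hc2g' : c2 ∣ g' := hcopc2g.dvd_of_dvd_mul_left (hc2c.trans hcgg)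
    have hc1G : c1 ∣ Gg := EuclideanDomain.dvd_gcd (EuclideanDomain.gcd_dvd_right c g)
      (((EuclideanDomain.gcd_dvd_left c g).trans hcE).trans hEA)
    have hc2G : c2 ∣ Gg' := EuclideanDomain.dvd_gcd hc2g' ((hc2c.trans hcE).trans hEB')
    calc c = c1 * c2 := hc12.symm
    _ ∣ Gg * Gg' := mul_dvd_mul hc1G hc2G
  -- compute d
  have hdc : c.natDegree + d = Gg.natDegree + Gg'.natDegree + ℓ := by
    have hpg : pgcd g A = monicize Gg := rfl
    have hpg' : pgcd g' B = monicize Gg' := rfl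
    have hpc : pgcd (g * g') E = monicize c := rfl
    set N : Polynomial F := pgcd g A * pgcd g' B * E with hN
    have hN0 : N ≠ 0 := by
      rw [hN, hpg, hpg']
      exact mul_ne_zero (mul_ne_zero (monicize_ne_zero hGg0) (monicize_ne_zero hGg'0)) hE0
    have hpc0 : monicize c ≠ 0 := monicize_ne_zero hc0
    have hcN : monicize c ∣ N := by
      have h1 : monicize c ∣ c := (associated_monicize c hc0).symm.dvd
      have h2 : c ∣ Gg * Gg' * E := dvd_mul_of_dvd_left hcGG E
      have h3 : Gg * Gg' * E ∣ N := by
        rw [hN, hpg, hpg']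
        exact mul_dvd_mul (mul_dvd_mul (associated_monicize Gg hGg0).dvd
          (associated_monicize Gg' hGg'0).dvd) dvd_rfl
      exact (h1.trans h2).trans h3
    have hdiv : monicize c * (N / monicize c) = N :=
      EuclideanDomain.mul_div_cancel' hpc0 hcN
    have hq0 : N / monicize c ≠ 0 := by
      intro h
      rw [h, mul_zero] at hdiv
      exact hN0 hdiv.symm
    have hNdeg : N.natDegree = Gg.natDegree + Gg'.natDegree + ℓ := by
      rw [hN, hpg, hpg', natDegree_mul (mul_ne_zero (monicize_ne_zero hGg0)
        (monicize_ne_zero hGg'0)) hE0,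
        natDegree_mul (monicize_ne_zero hGg0) (monicize_ne_zero hGg'0),
        natDegree_monicize, natDegree_monicize, hEd]
    have hq : N.natDegree = (monicize c).natDegree + (N / monicize c).natDegree := by
      conv_lhs => rw [← hdiv]
      rw [natDegree_mul hpc0 hq0]
    rw [natDegree_monicize] at hq
    have hdval : d = (N / monicize c).natDegree := by
      rw [hd, hpc]
    omega
  -- the final numerical identity: n + n' - d = L.natDegree
  have hfinal : n + n' - d = L.natDegree := by omega
  -- ## Matrix part
  have hKA : ∀ w : Fin m → F,
      (∀ k : Fin n, (∑ i : Fin m, g.coeff ((k.1 + (n - 1) * i.1) % n) * w i) = 0)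
        ↔ a ∣ polyOfFun w := by
    intro w
    rw [← hkeyA (polyOfFun w)]
    exact (conv_iff hn g hg w).symm
  have hKB : ∀ w : Fin m → F,
      (∀ k : Fin n', (∑ i : Fin m, g'.coeff ((k.1 + (n' - 1) * i.1) % n') * w i) = 0)
        ↔ b ∣ polyOfFun w := by
    intro w
    rw [← hkeyB (polyOfFun w)]
    exact (conv_iff hn' g' hg' w).symm
  have hker : LinearMap.ker ((fromCols (circMat F m n g) (circMat F m n' g'))ᵀ.mulVecLin)
      = Submodule.comap (polyOfL F m) ((Ideal.span {L}).restrictScalars F) := by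
    ext v
    rw [LinearMap.mem_ker, Submodule.mem_comap]
    have hrhs : (polyOfL F m v ∈ (Ideal.span {L}).restrictScalars F) ↔ L ∣ polyOfFun v := by
      rw [polyOfL_apply, Submodule.restrictScalars_mem, Ideal.mem_span_singleton]
    rw [hrhs, hL, EuclideanDomain.lcm_dvd_iff, Matrix.mulVecLin_apply,
      Matrix.transpose_fromCols, Matrix.fromRows_mulVec]
    have hb1 : ((circMat F m n g)ᵀ.mulVec v = 0)
        ↔ ∀ k : Fin n, (∑ i : Fin m, g.coeff ((k.1 + (n - 1) * i.1) % n) * v i) = 0 := by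
      rw [funext_iff]
      apply forall_congr'
      intro k
      have hentry : ((circMat F m n g)ᵀ.mulVec v) k
          = ∑ i : Fin m, g.coeff ((k.1 + (n - 1) * i.1) % n) * v i := by
        simp [Matrix.mulVec, dotProduct, circMat, Matrix.transpose_apply]
      rw [hentry]
      simp
    have hb2 : ((circMat F m n' g')ᵀ.mulVec v = 0)
        ↔ ∀ k : Fin n', (∑ i : Fin m, g'.coeff ((k.1 + (n' - 1) * i.1) % n') * v i) = 0 := by
      rw [funext_iff]
      apply forall_congr'
      intro k
      have hentry : ((circMat F m n' g')ᵀ.mulVec v) k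
          = ∑ i : Fin m, g'.coeff ((k.1 + (n' - 1) * i.1) % n') * v i := by
        simp [Matrix.mulVec, dotProduct, circMat, Matrix.transpose_apply]
      rw [hentry]
      simp
    have hsplit : (Sum.elim ((circMat F m n g)ᵀ.mulVec v) ((circMat F m n' g')ᵀ.mulVec v) = 0)
        ↔ ((circMat F m n g)ᵀ.mulVec v = 0 ∧ (circMat F m n' g')ᵀ.mulVec v = 0) := by
      constructor
      · intro hfh
        exact ⟨funext fun k => congrFun hfh (Sum.inl k), funext fun k => congrFun hfh (Sum.inr k)⟩
      · rintro ⟨h1, h2⟩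
        funext x
        cases x with
        | inl k => rw [Sum.elim_inl]; rw [h1]; rfl
        | inr k => rw [Sum.elim_inr]; rw [h2]; rfl
    rw [hsplit, hb1, hb2, hKA v, hKB v]
  -- rank-nullity
  rw [← Matrix.rank_transpose, Matrix.rank]
  have hkerrank : Module.finrank F
      (LinearMap.ker ((fromCols (circMat F m n g) (circMat F m n' g'))ᵀ.mulVecLin))
      = m - min m L.natDegree := by
    rw [hker]
    exact finrank_ker_polyOf m L hL0
  have hrn := LinearMap.finrank_range_add_finrank_ker
    ((fromCols (circMat F m n g) (circMat F m n' g'))ᵀ.mulVecLin)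
  rw [hkerrank, Module.finrank_fin_fun] at hrn
  have hminle : min m L.natDegree ≤ m := min_le_left _ _
  rw [hfinal]
  omega
end

section
/- Let F be a finite field with characteristic coprime to positive integers n and n', and let g, g' ∈ F[X] with deg g < n, deg g' < n'. Let C_{g,g'} = { (f·g mod X^n − 1, f·g' mod X^{n'} − 1) : f ∈ F[X] } ⊆ F^{n+n'}. Let ℓ = gcd(n, n') and d = deg[gcd(g, X^n − 1) · gcd(g', X^{n'} − 1) · (X^ℓ − 1) / gcd(g·g', X^ℓ − 1)]. Then dim_F C_{g,g'} = n + n' − d. -/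
open Polynomial Matrix

section Helpers
variable {F : Type*} [Field F]

lemma monicize_monic {p : F[X]} (hp : p ≠ 0) : (monicize p).Monic := by
  have h : p.leadingCoeff ≠ 0 := leadingCoeff_ne_zero.mpr hp
  rw [monicize, Monic, leadingCoeff_mul, leadingCoeff_C, inv_mul_cancel₀ h]

lemma monicize_assoc {p : F[X]} (hp : p ≠ 0) : Associated (monicize p) p := by
  have h : p.leadingCoeff ≠ 0 := leadingCoeff_ne_zero.mpr hp
  refine associated_of_dvd_dvd ⟨C p.leadingCoeff, ?_⟩ ⟨C p.leadingCoeff⁻¹, ?_⟩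
  · rw [monicize, mul_comm (C p.leadingCoeff⁻¹) p, mul_assoc, ← C_mul,
      inv_mul_cancel₀ h, C_1, mul_one]
  · rw [monicize, mul_comm]

lemma monicize_natDegree (p : F[X]) : (monicize p).natDegree = p.natDegree := by
  by_cases hp : p = 0
  · simp [monicize, hp]
  · exact natDegree_eq_of_degree_eq (degree_eq_degree_of_associated (monicize_assoc hp))

lemma sqf_dvd (y : F[X]) :
    ∀ x : F[X], Squarefree x → (∀ p : F[X], Prime p → p ∣ x → p ∣ y) → x ∣ y := by
  intro x
  induction x using UniqueFactorizationMonoid.induction_on_prime with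
  | h₁ => intro hx _; exact absurd hx not_squarefree_zero
  | h₂ x hx' => intro _ _; exact hx'.dvd
  | h₃ a p ha hp ih =>
    intro hsq H
    have hpa : ¬ p ∣ a := fun hd => hp.not_unit (hsq p (mul_dvd_mul_left p hd))
    have ha' : a ∣ y := ih hsq.of_mul_right (fun q hq hqa => H q hq (hqa.mul_left p))
    have hpy : p ∣ y := H p hp (dvd_mul_right p a)
    exact (hp.coprime_iff_not_dvd.mpr hpa).mul_dvd hpy ha'

lemma gcd_X_pow_sub_one (F : Type*) [Field F] [DecidableEq F] (m k : ℕ) :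
    Associated (EuclideanDomain.gcd ((X : F[X]) ^ m - 1) (X ^ k - 1))
      ((X : F[X]) ^ (Nat.gcd m k) - 1) := by
  induction m, k using Nat.gcd.induction with
  | H0 n =>
    simp only [pow_zero, sub_self, EuclideanDomain.gcd_zero_left, Nat.gcd_zero_left]
    exact Associated.refl _
  | H1 m n hm ih =>
    rw [Nat.gcd_rec]
    refine Associated.trans ?_ ih
    have hmod : n % m + m * (n / m) = n := Nat.mod_add_div n m
    have key : (X : F[X]) ^ n - 1
        = X ^ (n % m) * ((X ^ m) ^ (n / m) - 1) + (X ^ (n % m) - 1) := by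
      rw [mul_sub, ← pow_mul, ← pow_add, hmod]; ring
    have hdvd : (X : F[X]) ^ m - 1 ∣ (X ^ m) ^ (n / m) - 1 := by
      simpa using sub_dvd_pow_sub_pow ((X : F[X]) ^ m) 1 (n / m)
    apply associated_of_dvd_dvd
    · apply EuclideanDomain.dvd_gcd
      · have h1 : EuclideanDomain.gcd ((X : F[X]) ^ m - 1) (X ^ n - 1) ∣ X ^ n - 1 :=
          EuclideanDomain.gcd_dvd_right _ _
        have h2 : EuclideanDomain.gcd ((X : F[X]) ^ m - 1) (X ^ n - 1) ∣
            X ^ (n % m) * ((X ^ m) ^ (n / m) - 1) :=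
          ((EuclideanDomain.gcd_dvd_left _ _).trans hdvd).mul_left _
        have h3 : (X : F[X]) ^ (n % m) - 1
            = (X ^ n - 1) - X ^ (n % m) * ((X ^ m) ^ (n / m) - 1) := by
          rw [key]; ring
        rw [h3]; exact dvd_sub h1 h2
      · exact EuclideanDomain.gcd_dvd_left _ _
    · apply EuclideanDomain.dvd_gcd
      · exact EuclideanDomain.gcd_dvd_right _ _
      · rw [key]
        exact dvd_add (((EuclideanDomain.gcd_dvd_right _ _).trans hdvd).mul_left _)
          (EuclideanDomain.gcd_dvd_left _ _)

lemma finrank_range_eq {M : Type*} [AddCommGroup M] [Module F M]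
    (Φ : Polynomial F →ₗ[F] M) (h : Polynomial F) (hm : h.Monic)
    (hker : ∀ f, Φ f = 0 ↔ h ∣ f) :
    Module.finrank F (LinearMap.range Φ) = h.natDegree := by
  set N := h.natDegree with hN
  have hdeg : h.degree = (N : WithBot ℕ) := degree_eq_natDegree hm.ne_zero
  let ψ : degreeLT F N →ₗ[F] M := Φ ∘ₗ (degreeLT F N).subtype
  have hrange : LinearMap.range ψ = LinearMap.range Φ := by
    apply le_antisymm
    · rintro _ ⟨p, rfl⟩; exact ⟨p, rfl⟩
    · rintro _ ⟨f, rfl⟩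
      have hmem : f %ₘ h ∈ degreeLT F N := by
        rw [mem_degreeLT, ← hdeg]; exact degree_modByMonic_lt f hm
      refine ⟨⟨f %ₘ h, hmem⟩, ?_⟩
      show Φ (f %ₘ h) = Φ f
      conv_rhs => rw [← modByMonic_add_div f h]
      rw [map_add, (hker (h * (f /ₘ h))).mpr ⟨_, rfl⟩, add_zero]
  have hkerψ : LinearMap.ker ψ = ⊥ := by
    rw [LinearMap.ker_eq_bot']
    rintro ⟨p, hp⟩ h0
    have hdvd : h ∣ p := (hker p).mp h0
    have : p = 0 := by
      by_contra hp0
      have h1 : h.degree ≤ p.degree := degree_le_of_dvd hdvd hp0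
      rw [mem_degreeLT] at hp
      exact absurd (lt_of_le_of_lt h1 hp) (by rw [hdeg]; exact lt_irrefl _)
    simpa using this
  haveI : Module.Finite F (degreeLT F N) :=
    Module.Finite.equiv (degreeLTEquiv F N).symm
  have hrn := LinearMap.finrank_range_add_finrank_ker ψ
  rw [hkerψ, finrank_bot, add_zero, hrange] at hrn
  rw [hrn, (degreeLTEquiv F N).finrank_eq, Module.finrank_fin_fun]

end Helpers

theorem stmt_18 (F : Type*) [Field F] [Fintype F]
    (n n' : ℕ) (hn : 0 < n) (hn' : 0 < n')
    (hchar : Nat.Coprime (ringChar F) n) (hchar' : Nat.Coprime (ringChar F) n')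
    (g g' : Polynomial F) (hg : g.degree < n) (hg' : g'.degree < n')
    (ℓ : ℕ) (hℓ : ℓ = Nat.gcd n n')
    (d : ℕ)
    (hd : d = (pgcd g (X ^ n - 1) * pgcd g' (X ^ n' - 1) * (X ^ ℓ - 1)
                / pgcd (g * g') (X ^ ℓ - 1)).natDegree) :
    Module.finrank F
      (Submodule.span F
        (Set.range (fun f : Polynomial F =>
          ((fun k : Fin n => ((f * g) %ₘ (X ^ n - 1)).coeff k,
            fun k : Fin n' => ((f * g') %ₘ (X ^ n' - 1)).coeff k) :
            (Fin n → F) × (Fin n' → F)))))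
      = n + n' - d := by
  letI := Classical.decEq F
  set u : F[X] := X ^ n - 1 with hu_def
  set v : F[X] := X ^ n' - 1 with hv_def
  set w : F[X] := X ^ ℓ - 1 with hw_def
  have hℓdvd_n : ℓ ∣ n := by rw [hℓ]; exact Nat.gcd_dvd_left n n'
  have hℓdvd_n' : ℓ ∣ n' := by rw [hℓ]; exact Nat.gcd_dvd_right n n'
  have hℓpos : 0 < ℓ := by
    rw [hℓ]; exact Nat.gcd_pos_of_pos_left _ hn
  -- basic facts on X^m - 1
  have humonic : u.Monic := by rw [hu_def]; simpa using monic_X_pow_sub_C (1 : F) hn.ne'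
  have hvmonic : v.Monic := by rw [hv_def]; simpa using monic_X_pow_sub_C (1 : F) hn'.ne'
  have hwmonic : w.Monic := by rw [hw_def]; simpa using monic_X_pow_sub_C (1 : F) hℓpos.ne'
  have hu0 : u ≠ 0 := humonic.ne_zero
  have hv0 : v ≠ 0 := hvmonic.ne_zero
  have hw0 : w ≠ 0 := hwmonic.ne_zero
  have hunat : u.natDegree = n := by
    rw [hu_def]; simpa using natDegree_X_pow_sub_C (n := n) (r := (1 : F))
  have hvnat : v.natDegree = n' := by
    rw [hv_def]; simpa using natDegree_X_pow_sub_C (n := n') (r := (1 : F))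
  have hwnat : w.natDegree = ℓ := by
    rw [hw_def]; simpa using natDegree_X_pow_sub_C (n := ℓ) (r := (1 : F))
  have hudeg : u.degree = (n : WithBot ℕ) := by
    rw [hu_def]; simpa using degree_X_pow_sub_C hn (1 : F)
  have hvdeg : v.degree = (n' : WithBot ℕ) := by
    rw [hv_def]; simpa using degree_X_pow_sub_C hn' (1 : F)
  -- squarefreeness
  have hsq : ∀ m : ℕ, Nat.Coprime (ringChar F) m → Squarefree ((X : F[X]) ^ m - 1) := by
    intro m hcop
    refine (X_pow_sub_one_separable_iff.mpr ?_).squarefree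
    intro h0
    have hdvd : ringChar F ∣ m := (CharP.cast_eq_zero_iff F (ringChar F) m).mp h0
    exact CharP.ringChar_ne_one (Nat.dvd_one.mp (hcop ▸ Nat.dvd_gcd dvd_rfl hdvd))
  have husq : Squarefree u := by rw [hu_def]; exact hsq n hchar
  have hvsq : Squarefree v := by rw [hv_def]; exact hsq n' hchar'
  have hwsq : Squarefree w := by
    rw [hw_def]; exact hsq ℓ (Nat.Coprime.coprime_dvd_right hℓdvd_n hchar)
  -- divisibility X^ℓ-1 ∣ X^n-1
  have hwu : w ∣ u := by
    obtain ⟨k, hk⟩ := hℓdvd_n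
    have h := sub_dvd_pow_sub_pow ((X : F[X]) ^ ℓ) 1 k
    rw [← pow_mul, one_pow, ← hk] at h
    exact h
  have hwv : w ∣ v := by
    obtain ⟨k, hk⟩ := hℓdvd_n'
    have h := sub_dvd_pow_sub_pow ((X : F[X]) ^ ℓ) 1 k
    rw [← pow_mul, one_pow, ← hk] at h
    exact h
  -- gcd decompositions
  have hpga : pgcd g u = monicize (EuclideanDomain.gcd g u) := rfl
  have hpgb : pgcd g' v = monicize (EuclideanDomain.gcd g' v) := rfl
  obtain ⟨s, t, hstu⟩ : ∃ s t, g * s + u * t = EuclideanDomain.gcd g u :=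
    ⟨_, _, (EuclideanDomain.gcd_eq_gcd_ab g u).symm⟩
  obtain ⟨s', t', hstv⟩ : ∃ s t, g' * s + v * t = EuclideanDomain.gcd g' v :=
    ⟨_, _, (EuclideanDomain.gcd_eq_gcd_ab g' v).symm⟩
  have ha0 : EuclideanDomain.gcd g u ≠ 0 :=
    fun h => hu0 (EuclideanDomain.gcd_eq_zero_iff.mp h).2
  have hb0 : EuclideanDomain.gcd g' v ≠ 0 :=
    fun h => hv0 (EuclideanDomain.gcd_eq_zero_iff.mp h).2
  obtain ⟨u₁, hu₁⟩ := EuclideanDomain.gcd_dvd_right g u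
  obtain ⟨g₁, hg₁⟩ := EuclideanDomain.gcd_dvd_left g u
  obtain ⟨v₁, hv₁⟩ := EuclideanDomain.gcd_dvd_right g' v
  obtain ⟨g₁', hg₁'⟩ := EuclideanDomain.gcd_dvd_left g' v
  set A := EuclideanDomain.gcd g u with hA
  set B := EuclideanDomain.gcd g' v with hB
  clear_value A B
  have hu₁0 : u₁ ≠ 0 := by rintro rfl; rw [mul_zero] at hu₁; exact hu0 hu₁
  have hv₁0 : v₁ ≠ 0 := by rintro rfl; rw [mul_zero] at hv₁; exact hv0 hv₁
  have hu₁u : u₁ ∣ u := ⟨A, by rw [hu₁]; ring⟩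
  have hv₁v : v₁ ∣ v := ⟨B, by rw [hv₁]; ring⟩
  -- coprimality of cofactors
  have hcop_u : IsCoprime u₁ g₁ := by
    rw [hg₁, hu₁] at hstu
    have h1 : g₁ * s + u₁ * t = 1 := by
      have h2 : A * (g₁ * s + u₁ * t) = A * 1 := by linear_combination hstu
      simpa using mul_left_cancel₀ ha0 h2
    exact ⟨t, s, by linear_combination h1⟩
  have hcop_v : IsCoprime v₁ g₁' := by
    rw [hg₁', hv₁] at hstv
    have h1 : g₁' * s' + v₁ * t' = 1 := by
      have h2 : B * (g₁' * s' + v₁ * t') = B * 1 := by linear_combination hstv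
      simpa using mul_left_cancel₀ hb0 h2
    exact ⟨t', s', by linear_combination h1⟩
  -- divisibility characterizations
  have hdvd_u : ∀ f : F[X], u ∣ f * g ↔ u₁ ∣ f := by
    intro f
    constructor
    · intro hf
      rw [hu₁, hg₁] at hf
      have h : A * u₁ ∣ A * (f * g₁) := by
        convert hf using 1
        ring
      exact hcop_u.dvd_of_dvd_mul_right ((mul_dvd_mul_iff_left ha0).mp h)
    · rintro ⟨c, rfl⟩
      rw [hu₁, hg₁]; exact ⟨c * g₁, by ring⟩
  have hdvd_v : ∀ f : F[X], v ∣ f * g' ↔ v₁ ∣ f := by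
    intro f
    constructor
    · intro hf
      rw [hv₁, hg₁'] at hf
      have h : B * v₁ ∣ B * (f * g₁') := by
        convert hf using 1
        ring
      exact hcop_v.dvd_of_dvd_mul_right ((mul_dvd_mul_iff_left hb0).mp h)
    · rintro ⟨c, rfl⟩
      rw [hv₁, hg₁']; exact ⟨c * g₁', by ring⟩
  -- the lcm and its monicization
  set L := EuclideanDomain.lcm u₁ v₁ with hL_def
  have hL0 : L ≠ 0 := by
    rw [hL_def, Ne, EuclideanDomain.lcm_eq_zero_iff]
    rintro (h | h)
    exacts [hu₁0 h, hv₁0 h]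
  have hhmonic : (monicize L).Monic := monicize_monic hL0
  -- the linear map
  let Φ₁ : Polynomial F →ₗ[F] (Fin n → F) :=
    LinearMap.pi fun k : Fin n =>
      (lcoeff F (k : ℕ)) ∘ₗ (modByMonicHom u) ∘ₗ (LinearMap.mulRight F g)
  let Φ₂ : Polynomial F →ₗ[F] (Fin n' → F) :=
    LinearMap.pi fun k : Fin n' =>
      (lcoeff F (k : ℕ)) ∘ₗ (modByMonicHom v) ∘ₗ (LinearMap.mulRight F g')
  let Φ := Φ₁.prod Φ₂
  have hfun : (fun f : Polynomial F =>
      ((fun k : Fin n => ((f * g) %ₘ u).coeff k,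
        fun k : Fin n' => ((f * g') %ₘ v).coeff k) :
        (Fin n → F) × (Fin n' → F))) = ⇑Φ := rfl
  rw [hfun, ← LinearMap.coe_range, Submodule.span_eq]
  -- kernel characterization
  have hker : ∀ f : Polynomial F, Φ f = 0 ↔ monicize L ∣ f := by
    intro f
    have hassocL : monicize L ∣ f ↔ L ∣ f := (monicize_assoc hL0).dvd_iff_dvd_left
    rw [hassocL]
    have hcomp : Φ f = (Φ₁ f, Φ₂ f) := rfl
    rw [hcomp, Prod.mk_eq_zero]
    have e1 : Φ₁ f = 0 ↔ u₁ ∣ f := by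
      rw [← hdvd_u f, ← modByMonic_eq_zero_iff_dvd humonic]
      constructor
      · intro h0
        ext i
        by_cases hi : i < n
        · have h := congrFun h0 (⟨i, hi⟩ : Fin n)
          simpa [Φ₁] using h
        · simp only [coeff_zero]
          refine coeff_eq_zero_of_degree_lt
            (lt_of_lt_of_le (degree_modByMonic_lt _ humonic) ?_)
          rw [hudeg]
          exact_mod_cast Nat.le_of_not_lt hi
      · intro h0; funext k; simp [Φ₁, h0]
    have e2 : Φ₂ f = 0 ↔ v₁ ∣ f := by
      rw [← hdvd_v f, ← modByMonic_eq_zero_iff_dvd hvmonic]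
      constructor
      · intro h0
        ext i
        by_cases hi : i < n'
        · have h := congrFun h0 (⟨i, hi⟩ : Fin n')
          simpa [Φ₂] using h
        · simp only [coeff_zero]
          refine coeff_eq_zero_of_degree_lt
            (lt_of_lt_of_le (degree_modByMonic_lt _ hvmonic) ?_)
          rw [hvdeg]
          exact_mod_cast Nat.le_of_not_lt hi
      · intro h0; funext k; simp [Φ₂, h0]
    rw [e1, e2]
    constructor
    · rintro ⟨h1, h2⟩; exact EuclideanDomain.lcm_dvd h1 h2
    · intro h
      exact ⟨(EuclideanDomain.dvd_lcm_left _ _).trans h,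
        (EuclideanDomain.dvd_lcm_right _ _).trans h⟩
  rw [finrank_range_eq Φ (monicize L) hhmonic hker, monicize_natDegree]
  -- now the degree computation
  have hG10 : EuclideanDomain.gcd u₁ v₁ ≠ 0 :=
    fun h => hu₁0 (EuclideanDomain.gcd_eq_zero_iff.mp h).1
  have hG20 : EuclideanDomain.gcd (g * g') w ≠ 0 :=
    fun h => hw0 (EuclideanDomain.gcd_eq_zero_iff.mp h).2
  have hG1w : EuclideanDomain.gcd u₁ v₁ ∣ w := by
    have h1 : EuclideanDomain.gcd u₁ v₁ ∣ EuclideanDomain.gcd u v :=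
      EuclideanDomain.dvd_gcd ((EuclideanDomain.gcd_dvd_left u₁ v₁).trans hu₁u)
        ((EuclideanDomain.gcd_dvd_right u₁ v₁).trans hv₁v)
    have h2 : EuclideanDomain.gcd u v ∣ w := by
      rw [hu_def, hv_def, hw_def, hℓ]
      exact (gcd_X_pow_sub_one F n n').dvd
    exact h1.trans h2
  have hG2w : EuclideanDomain.gcd (g * g') w ∣ w := EuclideanDomain.gcd_dvd_right _ _
  have hcopG : IsCoprime (EuclideanDomain.gcd u₁ v₁) (EuclideanDomain.gcd (g * g') w) := by
    refine isCoprime_of_prime_dvd (fun hc => hG10 hc.1) ?_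
    intro p hp hp1 hp2
    have hpu₁ : p ∣ u₁ := hp1.trans (EuclideanDomain.gcd_dvd_left _ _)
    have hpv₁ : p ∣ v₁ := hp1.trans (EuclideanDomain.gcd_dvd_right _ _)
    have hpgg' : p ∣ g * g' := hp2.trans (EuclideanDomain.gcd_dvd_left _ _)
    rcases hp.dvd_or_dvd hpgg' with hpg | hpg'
    · have hpa : p ∣ A := by
        rw [hA]; exact EuclideanDomain.dvd_gcd hpg (hpu₁.trans hu₁u)
      exact hp.not_unit (husq p (by rw [hu₁]; exact mul_dvd_mul hpa hpu₁))
    · have hpb : p ∣ B := by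
        rw [hB]; exact EuclideanDomain.dvd_gcd hpg' (hpv₁.trans hv₁v)
      exact hp.not_unit (hvsq p (by rw [hv₁]; exact mul_dvd_mul hpb hpv₁))
  have hwdvd : w ∣ EuclideanDomain.gcd u₁ v₁ * EuclideanDomain.gcd (g * g') w := by
    refine sqf_dvd _ w hwsq ?_
    intro p hp hpw
    have hpu : p ∣ u := hpw.trans hwu
    have hpv : p ∣ v := hpw.trans hwv
    by_cases hpg : p ∣ g
    · exact (EuclideanDomain.dvd_gcd (hpg.mul_right g') hpw).mul_left _
    · by_cases hpg' : p ∣ g'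
      · exact (EuclideanDomain.dvd_gcd (hpg'.mul_left g) hpw).mul_left _
      · have hpu₁ : p ∣ u₁ := by
          rcases hp.dvd_or_dvd (hu₁ ▸ hpu) with h | h
          · exact absurd (h.trans ⟨g₁, hg₁⟩) hpg
          · exact h
        have hpv₁ : p ∣ v₁ := by
          rcases hp.dvd_or_dvd (hv₁ ▸ hpv) with h | h
          · exact absurd (h.trans ⟨g₁', hg₁'⟩) hpg'
          · exact h
        exact (EuclideanDomain.dvd_gcd hpu₁ hpv₁).mul_right _
  have hWassoc : Associated (EuclideanDomain.gcd u₁ v₁ * EuclideanDomain.gcd (g * g') w) w :=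
    associated_of_dvd_dvd (hcopG.mul_dvd hG1w hG2w) hwdvd
  -- numeric degree equations
  have hWeq : (EuclideanDomain.gcd u₁ v₁).natDegree
      + (EuclideanDomain.gcd (g * g') w).natDegree = ℓ := by
    rw [← natDegree_mul hG10 hG20,
      natDegree_eq_of_degree_eq (degree_eq_degree_of_associated hWassoc), hwnat]
  have hAeq : A.natDegree + u₁.natDegree = n := by
    rw [← natDegree_mul ha0 hu₁0, ← hu₁, hunat]
  have hBeq : B.natDegree + v₁.natDegree = n' := by
    rw [← natDegree_mul hb0 hv₁0, ← hv₁, hvnat]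
  have hLeq : (EuclideanDomain.gcd u₁ v₁).natDegree + L.natDegree
      = u₁.natDegree + v₁.natDegree := by
    rw [← natDegree_mul hG10 hL0, hL_def, EuclideanDomain.gcd_mul_lcm,
      natDegree_mul hu₁0 hv₁0]
  -- the quantity d
  have hpgQ : pgcd (g * g') w = monicize (EuclideanDomain.gcd (g * g') w) := rfl
  have hA0' : pgcd g u ≠ 0 := by rw [hpga]; exact (monicize_monic ha0).ne_zero
  have hB0' : pgcd g' v ≠ 0 := by rw [hpgb]; exact (monicize_monic hb0).ne_zero
  have hQm : (pgcd (g * g') w).Monic := by rw [hpgQ]; exact monicize_monic hG20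
  have hQdvd : pgcd (g * g') w ∣ pgcd g u * pgcd g' v * w := by
    exact Dvd.dvd.mul_left (hpgQ ▸ ((monicize_assoc hG20).dvd).trans hG2w) _
  obtain ⟨c, hc⟩ := hQdvd
  have hdc : d = c.natDegree := by
    rw [hd, hc, ← divByMonic_eq_div _ hQm, mul_divByMonic_cancel_left _ hQm]
  have hc0 : c ≠ 0 := by
    rintro rfl
    rw [mul_zero] at hc
    exact (mul_ne_zero (mul_ne_zero hA0' hB0') hw0) hc
  have hdeg_eq : (EuclideanDomain.gcd (g * g') w).natDegree + c.natDegree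
      = A.natDegree + B.natDegree + ℓ := by
    have h1 : (pgcd (g * g') w).natDegree + c.natDegree
        = (pgcd g u * pgcd g' v * w).natDegree := by
      rw [← natDegree_mul hQm.ne_zero hc0, ← hc]
    rw [hpgQ, monicize_natDegree] at h1
    rw [h1, natDegree_mul (mul_ne_zero hA0' hB0') hw0, natDegree_mul hA0' hB0',
      hpga, hpgb, monicize_natDegree, monicize_natDegree, hwnat]
  omega
end
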